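/- Let $k : [1,\infty) \to \mathbb{N}$ be defined by $k(\nu) = $ the nearest integer to $\nu/2 - 1/4$ (rounding up at half-integers). Then $|k(\nu) - \nu/2| \le 3/4$ for all $\nu \ge 1$, and if a sequence $(\nu_j)$ with multiplicities satisfies $\#\{j : \nu_j \le \rho\} = c\rho^{n-1} + o(\rho^{n-1})$ for some $c > 0$ and integer $n \ge 2$, then $\sum_{j : \nu_j \le r} k(\nu_j) = \frac{c(n-1)}{2n} r^n + o(r^n)$ as $r \to \infty$. -/

import Mathlib

open Filter Asymptotics MeasureTheory

/-! Since `|k(ν) - ν/2| ≤ 3/4`, replacing each `k(ν_j)` by `ν_j / 2` costs `O(N(r)) = O(r^(n-1))`,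
where `N(ρ) = #{j : ν_j ≤ ρ}`. The layer-cake form of Abel summation gives
`∑_{ν_j ≤ r} ν_j = ∫₀ʳ (N(r) - N(t)) dt`, and inserting the Weyl law `N(t) = c t^(n-1) + o(t^(n-1))`
turns this into `c rⁿ - c rⁿ / n + o(rⁿ)`. -/

theorem abs_round_sub_sub_le (x a : ℝ) : |(round (x - a) : ℝ) - x| ≤ 1 / 2 + |a| :=
  calc |(round (x - a) : ℝ) - x| = |((round (x - a) : ℝ) - (x - a)) - a| := by ring_nf
    _ ≤ |(round (x - a) : ℝ) - (x - a)| + |a| := abs_sub _ _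
    _ ≤ 1 / 2 + |a| := by grw [abs_sub_comm, abs_sub_round]

theorem isLittleO_intervalIntegral_pow_succ {f : ℝ → ℝ} {m : ℕ}
    (hf : ∀ r, IntervalIntegrable f volume 0 r) (h : f =o[atTop] (· ^ m)) :
    (fun r => ∫ t in (0 : ℝ)..r, f t) =o[atTop] (· ^ (m + 1)) := by
  rw [isLittleO_iff]
  intro ε hε
  obtain ⟨T, hT⟩ := eventually_atTop.1 ((h.bound (half_pos hε)).and (eventually_ge_atTop 0))
  have hT₀ : 0 ≤ T := (hT T le_rfl).2
  have htail : ∀ r, T ≤ r → ‖∫ t in T..r, f t‖ ≤ ε / 2 * r ^ (m + 1) := fun r hr =>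
    calc ‖∫ t in T..r, f t‖ ≤ ∫ t in T..r, ε / 2 * t ^ m := by
          refine intervalIntegral.norm_integral_le_of_norm_le hr (ae_of_all _ fun t ht => ?_)
            (by apply Continuous.intervalIntegrable; fun_prop)
          simpa [abs_of_nonneg (hT₀.trans ht.1.le)] using (hT t ht.1.le).1
      _ = ε / 2 * ((r ^ (m + 1) - T ^ (m + 1)) / (m + 1)) := by
          rw [intervalIntegral.integral_const_mul, integral_pow]
      _ ≤ ε / 2 * r ^ (m + 1) := by
          have hTr : T ^ (m + 1) ≤ r ^ (m + 1) := by gcongr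
          gcongr
          exact (div_le_self (by linarith) (by linarith)).trans
            (by linarith [pow_nonneg hT₀ (m + 1)])
  have hhead : ∀ᶠ r in atTop, ‖∫ t in (0 : ℝ)..T, f t‖ ≤ ε / 2 * r ^ (m + 1) :=
    ((tendsto_pow_atTop m.succ_ne_zero).const_mul_atTop (half_pos hε)).eventually_ge_atTop _
  filter_upwards [eventually_ge_atTop T, hhead] with r hr hhead_r
  rw [← intervalIntegral.integral_add_adjacent_intervals (hf T) ((hf T).symm.trans (hf r)),
    Real.norm_of_nonneg (pow_nonneg (hT₀.trans hr) _)]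
  linarith [norm_add_le (∫ t in (0 : ℝ)..T, f t) (∫ t in T..r, f t), htail r hr]

theorem integral_indicator_Iio_one {a r : ℝ} (ha : 0 ≤ a) (har : a ≤ r) :
    ∫ t in (0 : ℝ)..r, (Set.Iio a).indicator 1 t = a := by
  have hset : Set.Ioc 0 r ∩ Set.Iio a = Set.Ioo 0 a :=
    Set.ext fun t => ⟨fun h => ⟨h.1.1, h.2⟩, fun h => ⟨⟨h.1, h.2.le.trans har⟩, h.2⟩⟩
  rw [intervalIntegral.integral_of_le (ha.trans har), setIntegral_indicator measurableSet_Iio, hset]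
  simp [Real.volume_real_Ioo_of_le ha]

section CountingFunction

variable {ι : Type*} {ν : ι → ℝ} (hfin : ∀ ρ, {j | ν j ≤ ρ}.Finite)

theorem monotone_card_toFinset_le : Monotone fun ρ => ((hfin ρ).toFinset.card : ℝ) :=
  fun _ _ h => Nat.cast_le.2 <| Finset.card_le_card fun j hj => by
    simp only [Set.Finite.mem_toFinset, Set.mem_ofPred_eq] at hj ⊢
    exact hj.trans h

theorem card_toFinset_le_sub_card_toFinset_le {t r : ℝ} (htr : t ≤ r) :
    ((hfin r).toFinset.card : ℝ) - (hfin t).toFinset.card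
      = ∑ j ∈ (hfin r).toFinset, (Set.Iio (ν j)).indicator 1 t := by
  have hfilter : (hfin t).toFinset = (hfin r).toFinset.filter (fun j => ν j ≤ t) := by
    ext j
    simp only [Finset.mem_filter, Set.Finite.mem_toFinset, Set.mem_ofPred_eq]
    exact ⟨fun h => ⟨h.trans htr, h⟩, And.right⟩
  rw [hfilter, ← Finset.sum_boole, Finset.card_eq_sum_ones, Nat.cast_sum, ← Finset.sum_sub_distrib]
  refine Finset.sum_congr rfl fun j _ => ?_
  by_cases h : t < ν j <;> simp [h, not_lt.1]

theorem sum_toFinset_le_eq_integral (hν : ∀ j, 0 ≤ ν j) {r : ℝ} (hr : 0 ≤ r) :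
    ∑ j ∈ (hfin r).toFinset, ν j
      = ∫ t in (0 : ℝ)..r, (((hfin r).toFinset.card : ℝ) - (hfin t).toFinset.card) := by
  have hone : IntervalIntegrable (1 : ℝ → ℝ) volume 0 r := intervalIntegrable_const
  rw [intervalIntegral.integral_congr fun t ht =>
      card_toFinset_le_sub_card_toFinset_le hfin (Set.uIcc_of_le hr ▸ ht).2,
    intervalIntegral.integral_finsetSum fun j _ =>
      ⟨hone.1.indicator measurableSet_Iio, hone.2.indicator measurableSet_Iio⟩]
  refine Finset.sum_congr rfl fun j hj => (integral_indicator_Iio_one (hν j) ?_).symm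
  simpa using hj

theorem isBigO_sum_toFinset_le_card {g : ι → ℝ} {C : ℝ} (hg : ∀ j, |g j| ≤ C) (l : Filter ℝ) :
    (fun r => ∑ j ∈ (hfin r).toFinset, g j) =O[l] fun r => ((hfin r).toFinset.card : ℝ) :=
  isBigO_of_le' (c := C) l fun r =>
    calc ‖∑ j ∈ (hfin r).toFinset, g j‖ ≤ ∑ j ∈ (hfin r).toFinset, |g j| :=
          Finset.abs_sum_le_sum_abs _ _
      _ ≤ C * (hfin r).toFinset.card := by
          simpa [mul_comm] using Finset.sum_le_card_nsmul _ _ C fun j _ => hg j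
      _ = C * ‖((hfin r).toFinset.card : ℝ)‖ := by rw [Real.norm_natCast]

theorem isLittleO_sum_toFinset_le_sub_pow (hν : ∀ j, 0 ≤ ν j) {c : ℝ} {m : ℕ}
    (hweyl : (fun ρ => ((hfin ρ).toFinset.card : ℝ) - c * ρ ^ m) =o[atTop] (· ^ m)) :
    (fun r => ∑ j ∈ (hfin r).toFinset, ν j - c * m / (m + 1) * r ^ (m + 1))
      =o[atTop] (· ^ (m + 1)) := by
  have hN : ∀ r, IntervalIntegrable (fun t => ((hfin t).toFinset.card : ℝ)) volume 0 r :=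
    fun _ => (monotone_card_toFinset_le hfin).intervalIntegrable
  have hpow : ∀ r, IntervalIntegrable (fun t : ℝ => c * t ^ m) volume 0 r :=
    fun _ => by apply Continuous.intervalIntegrable; fun_prop
  have hbulk := isLittleO_intervalIntegral_pow_succ (fun r => (hN r).sub (hpow r)) hweyl
  have hboundary : (fun r => r * (((hfin r).toFinset.card : ℝ) - c * r ^ m))
      =o[atTop] (· ^ (m + 1)) := by
    simpa only [pow_succ'] using (isBigO_refl (fun r : ℝ => r) atTop).mul_isLittleO hweyl
  refine (hboundary.sub hbulk).congr' ?_ EventuallyEq.rfl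
  filter_upwards [eventually_ge_atTop 0] with r hr
  rw [sum_toFinset_le_eq_integral hfin hν hr, intervalIntegral.integral_sub intervalIntegrable_const (hN r),
    intervalIntegral.integral_sub (hN r) (hpow r), intervalIntegral.integral_const,
    intervalIntegral.integral_const_mul, integral_pow, zero_pow m.succ_ne_zero, sub_zero, smul_eq_mul]
  field_simp
  ring

end CountingFunction

theorem watson_count_summation_general
    (n : ℕ) (hn : 2 ≤ n) (c : ℝ)
    (ν : ℕ → ℝ) (hν : ∀ j, 1 ≤ ν j)
    (hfin : ∀ ρ : ℝ, {j | ν j ≤ ρ}.Finite)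
    (hweyl : (fun ρ : ℝ => (((hfin ρ).toFinset.card : ℝ) - c * ρ ^ (n - 1)))
      =o[atTop] (fun ρ : ℝ => ρ ^ (n - 1))) :
    (∀ νr : ℝ, 1 ≤ νr → |((round (νr / 2 - 1 / 4) : ℤ) : ℝ) - νr / 2| ≤ 3 / 4) ∧
    (fun r : ℝ =>
        (∑ j ∈ (hfin r).toFinset, ((round (ν j / 2 - 1 / 4) : ℤ) : ℝ))
          - c * ((n : ℝ) - 1) / (2 * n) * r ^ n)
      =o[atTop] (fun r : ℝ => r ^ n) := by
  obtain ⟨m, rfl⟩ : ∃ m, n = m + 1 := ⟨n - 1, by omega⟩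
  rw [Nat.add_sub_cancel] at hweyl
  have hround (x : ℝ) : |((round (x / 2 - 1 / 4) : ℤ) : ℝ) - x / 2| ≤ 3 / 4 := by
    have := abs_round_sub_sub_le (x / 2) (1 / 4)
    rw [abs_of_pos (by norm_num : (0 : ℝ) < 1 / 4)] at this
    linarith
  refine ⟨fun x _ => hround x, ?_⟩
  have hcard : (fun ρ => ((hfin ρ).toFinset.card : ℝ)) =O[atTop] (· ^ m) :=
    (hweyl.add_isBigO ((isBigO_refl _ _).const_mul_left c)).congr_left fun _ => sub_add_cancel _ _
  have hrounding := ((isBigO_sum_toFinset_le_card hfin (fun j => hround (ν j)) atTop).trans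
    hcard).trans_isLittleO (isLittleO_pow_pow_atTop_of_lt m.lt_succ_self)
  have hmain := isLittleO_sum_toFinset_le_sub_pow hfin (fun j => zero_le_one.trans (hν j)) hweyl
  have hcoeff : c * (((m + 1 : ℕ) : ℝ) - 1) / (2 * (m + 1 : ℕ)) = 1 / 2 * (c * m / (m + 1)) := by
    push_cast
    field_simp
    ring
  refine (hrounding.add (hmain.const_mul_left (1 / 2))).congr_left fun r => ?_
  rw [hcoeff, Finset.sum_sub_distrib, ← Finset.sum_div]
  ring

/-- Watson's count of zeros of `H²_ν` in the sector `0 ≤ arg z ≤ π/2` is the nearest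
integer `k(ν)` to `ν/2 - 1/4` (rounding up at half-integers, as Mathlib's `round` does);
then `|k(ν) - ν/2| ≤ 3/4` for `ν ≥ 1`, and summing these counts against a Weyl law
`#{j : ν_j ≤ ρ} = c ρ^(n-1) + o(ρ^(n-1))` gives
`∑_{ν_j ≤ r} k(ν_j) = (c(n-1)/(2n)) rⁿ + o(rⁿ)`. -/
theorem watson_count_summation
    (n : ℕ) (hn : 2 ≤ n) (c : ℝ) (hc : 0 < c)
    (ν : ℕ → ℝ) (hν : ∀ j, 1 ≤ ν j)
    (hfin : ∀ ρ : ℝ, {j | ν j ≤ ρ}.Finite)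
    (hweyl : (fun ρ : ℝ => (((hfin ρ).toFinset.card : ℝ) - c * ρ ^ (n - 1)))
      =o[atTop] (fun ρ : ℝ => ρ ^ (n - 1))) :
    (∀ νr : ℝ, 1 ≤ νr → |((round (νr / 2 - 1 / 4) : ℤ) : ℝ) - νr / 2| ≤ 3 / 4) ∧
    (fun r : ℝ =>
        (∑ j ∈ (hfin r).toFinset, ((round (ν j / 2 - 1 / 4) : ℤ) : ℝ))
          - c * ((n : ℝ) - 1) / (2 * n) * r ^ n)
      =o[atTop] (fun r : ℝ => r ^ n) :=
  watson_count_summation_general n hn c ν hν hfin hweyl
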